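/- For every measurable g : 𝒱 → ℝ such that the displayed random variables are integrable, E[w·(φ − (Y¹−Y⁰))·g(V)] = 0. -/

import Mathlib

open MeasureTheory ProbabilityTheory

/-- The weight `w = (A − π(X))·λ'(π(X)) + λ(π(X))`. -/
noncomputable def wFun {Ω 𝓧 : Type*} (lam lam' : ℝ → ℝ) (A : Ω → ℝ) (X : Ω → 𝓧)
    (p : 𝓧 → ℝ) (ω : Ω) : ℝ :=
  (A ω - p (X ω)) * lam' (p (X ω)) + lam (p (X ω))

/-- The pseudo-outcome
`φ = (λ(π(X))/w)·[(A/π(X))(Y − Q¹(X)) − ((1−A)/(1−π(X)))(Y − Q⁰(X))] + Q¹(X) − Q⁰(X)`. -/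
noncomputable def phiFun {Ω 𝓧 : Type*} (lam lam' : ℝ → ℝ) (A Y : Ω → ℝ) (X : Ω → 𝓧)
    (p q0 q1 : 𝓧 → ℝ) (ω : Ω) : ℝ :=
  lam (p (X ω)) / wFun lam lam' A X p ω *
      (A ω / p (X ω) * (Y ω - q1 (X ω)) - (1 - A ω) / (1 - p (X ω)) * (Y ω - q0 (X ω)))
    + q1 (X ω) - q0 (X ω)

/-! Because `A ∈ {0,1}`, the weight `w` cancels the denominator of `φ`, and `w·(φ − (Y¹ − Y⁰))`
equals `(A − π(X))·c(X, Y⁰, Y¹)` for an explicit coefficient `c`. Conditional exchangeability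
gives `E[A | X, Y⁰, Y¹] = E[A | X] = π(X)`, so `A − π(X)` is orthogonal to every integrable
function of `(X, Y⁰, Y¹)`, in particular to `c(X, Y⁰, Y¹)·g(V)`. -/

section CondIndep

variable {Ω 𝓧 β : Type*} {m mΩ : MeasurableSpace Ω} [mX : MeasurableSpace 𝓧]
  [mβ : MeasurableSpace β] {P : Measure Ω} [IsFiniteMeasure P] {W : Ω → β} {A : Ω → ℝ}

lemma indicator_preimage_one_of_zero_or_one (hA01 : ∀ ω, A ω = 0 ∨ A ω = 1) :
    (A ⁻¹' {1}).indicator (fun _ => (1 : ℝ)) = A := by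
  funext ω
  rcases hA01 ω with h | h <;> simp [h]

lemma integrable_of_zero_or_one (hA : Measurable A) (hA01 : ∀ ω, A ω = 0 ∨ A ω = 1) :
    Integrable A P :=
  indicator_preimage_one_of_zero_or_one hA01 ▸
    (integrable_const 1).indicator (hA (measurableSet_singleton 1))

omit [IsFiniteMeasure P] in
lemma comap_le_comap_prodMk (X : Ω → 𝓧) (W : Ω → β) :
    mX.comap X ≤ (mX.prod mβ).comap fun ω => (X ω, W ω) := by
  rw [MeasurableSpace.comap_prodMk]
  exact le_sup_left

variable [StandardBorelSpace Ω]

lemma setIntegral_inter_preimage_eq_setIntegral_condExp {hm : m ≤ mΩ}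
    (hW : Measurable W) (hA : Measurable A) (hA01 : ∀ ω, A ω = 0 ∨ A ω = 1)
    (hWA : CondIndepFun m hm W A P) {s : Set Ω} (hs : MeasurableSet[m] s) {t : Set β}
    (ht : MeasurableSet t) :
    ∫ ω in s ∩ W ⁻¹' t, A ω ∂P = ∫ ω in s ∩ W ⁻¹' t, (P[A | m]) ω ∂P := by
  have hT : MeasurableSet (W ⁻¹' t) := hW ht
  have hAint : Integrable A P := integrable_of_zero_or_one hA hA01
  have hind : (W ⁻¹' t).indicator A = (W ⁻¹' t ∩ A ⁻¹' {1}).indicator (fun _ => (1 : ℝ)) := by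
    rw [← Set.indicator_indicator, indicator_preimage_one_of_zero_or_one hA01]
  have hmul : (W ⁻¹' t).indicator (P[A | m])
      = (W ⁻¹' t).indicator (fun _ => (1 : ℝ)) * P[A | m] := by
    funext ω; by_cases h : ω ∈ W ⁻¹' t <;> simp [h]
  have hprod : P[(W ⁻¹' t).indicator A | m] =ᵐ[P] P[(W ⁻¹' t).indicator (P[A | m]) | m] := by
    have hsplit := (condIndepFun_iff_condExp_inter_preimage_eq_mul hW hA).1 hWA t {1} ht
      (measurableSet_singleton 1)
    rw [indicator_preimage_one_of_zero_or_one hA01] at hsplit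
    rw [hind, hmul]
    exact hsplit.trans (condExp_mul_of_stronglyMeasurable_right stronglyMeasurable_condExp
      (hmul ▸ integrable_condExp.indicator hT) ((integrable_const 1).indicator hT)).symm
  calc ∫ ω in s ∩ W ⁻¹' t, A ω ∂P
      = ∫ ω in s, P[(W ⁻¹' t).indicator A | m] ω ∂P := by
        rw [setIntegral_condExp hm (hAint.indicator hT) hs, setIntegral_indicator hT]
    _ = ∫ ω in s, P[(W ⁻¹' t).indicator (P[A | m]) | m] ω ∂P :=
        integral_congr_ae (ae_restrict_of_ae hprod)
    _ = ∫ ω in s ∩ W ⁻¹' t, (P[A | m]) ω ∂P := by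
        rw [setIntegral_condExp hm (integrable_condExp.indicator hT) hs, setIntegral_indicator hT]

variable {X : Ω → 𝓧}

lemma setIntegral_preimage_prodMk_eq_setIntegral_condExp (hX : Measurable X)
    (hW : Measurable W) (hA : Measurable A) (hA01 : ∀ ω, A ω = 0 ∨ A ω = 1)
    (hWA : CondIndepFun (mX.comap X) hX.comap_le W A P) {D : Set (𝓧 × β)}
    (hD : MeasurableSet D) :
    ∫ ω in (fun ω => (X ω, W ω)) ⁻¹' D, A ω ∂P
      = ∫ ω in (fun ω => (X ω, W ω)) ⁻¹' D, (P[A | mX.comap X]) ω ∂P := by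
  have hZ : Measurable fun ω => (X ω, W ω) := hX.prodMk hW
  have hAint : Integrable A P := integrable_of_zero_or_one hA hA01
  have happly : ∀ {f : Ω → ℝ}, Integrable f P → ∀ {E : Set (𝓧 × β)}, MeasurableSet E →
      (P.withDensityᵥ f).map (fun ω => (X ω, W ω)) E
        = ∫ ω in (fun ω => (X ω, W ω)) ⁻¹' E, f ω ∂P := fun hf _ hE => by
    rw [VectorMeasure.map_apply _ hZ hE, withDensityᵥ_apply hf (hZ hE)]
  have hrect : ∀ B t, MeasurableSet B → MeasurableSet t →
      (P.withDensityᵥ A).map (fun ω => (X ω, W ω)) (B ×ˢ t)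
        = (P.withDensityᵥ (P[A | mX.comap X])).map (fun ω => (X ω, W ω)) (B ×ˢ t) := by
    intro B t hB ht
    rw [happly hAint (hB.prod ht), happly integrable_condExp (hB.prod ht), Set.mk_preimage_prod]
    exact setIntegral_inter_preimage_eq_setIntegral_condExp hW hA hA01 hWA ⟨B, hB, rfl⟩ ht
  have hmeas : (P.withDensityᵥ A).map (fun ω => (X ω, W ω))
      = (P.withDensityᵥ (P[A | mX.comap X])).map (fun ω => (X ω, W ω)) := by
    refine VectorMeasure.ext_of_generateFrom _ ?_ generateFrom_prod.symm isPiSystem_prod ?_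
    · rintro _ ⟨B, hB, t, ht, rfl⟩
      exact hrect B t hB ht
    · simpa only [Set.univ_prod_univ] using hrect _ _ MeasurableSet.univ MeasurableSet.univ
  rw [← happly hAint hD, ← happly integrable_condExp hD, hmeas]

lemma condExp_comap_prodMk_eq_condExp (hX : Measurable X) (hW : Measurable W)
    (hA : Measurable A) (hA01 : ∀ ω, A ω = 0 ∨ A ω = 1)
    (hWA : CondIndepFun (mX.comap X) hX.comap_le W A P) :
    P[A | (mX.prod mβ).comap fun ω => (X ω, W ω)] =ᵐ[P] P[A | mX.comap X] := by
  refine (ae_eq_condExp_of_forall_setIntegral_eq (hX.prodMk hW).comap_le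
    (integrable_of_zero_or_one hA hA01) (fun _ _ _ => integrable_condExp.integrableOn) ?_
    (stronglyMeasurable_condExp.mono (comap_le_comap_prodMk X W)).aestronglyMeasurable).symm
  rintro _ ⟨D, hD, rfl⟩ _
  exact (setIntegral_preimage_prodMk_eq_setIntegral_condExp hX hW hA hA01 hWA hD).symm

lemma integral_comp_prodMk_mul_sub_condExp_eq_zero (hX : Measurable X) (hW : Measurable W)
    (hA : Measurable A) (hA01 : ∀ ω, A ω = 0 ∨ A ω = 1)
    (hWA : CondIndepFun (mX.comap X) hX.comap_le W A P) {K : 𝓧 × β → ℝ} (hK : Measurable K)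
    (hI : Integrable (fun ω => K (X ω, W ω) * (A ω - (P[A | mX.comap X]) ω)) P) :
    ∫ ω, K (X ω, W ω) * (A ω - (P[A | mX.comap X]) ω) ∂P = 0 := by
  have hZ : (mX.prod mβ).comap (fun ω => (X ω, W ω)) ≤ mΩ := (hX.prodMk hW).comap_le
  have hAint : Integrable A P := integrable_of_zero_or_one hA hA01
  have hres : P[A - P[A | mX.comap X] | (mX.prod mβ).comap fun ω => (X ω, W ω)] =ᵐ[P] 0 := by
    filter_upwards [condExp_sub hAint integrable_condExp _,
      condExp_comap_prodMk_eq_condExp hX hW hA hA01 hWA] with ω hsub hA'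
    rw [hsub, Pi.sub_apply, hA', condExp_of_stronglyMeasurable hZ
      (stronglyMeasurable_condExp.mono (comap_le_comap_prodMk X W)) integrable_condExp,
      Pi.zero_apply, sub_self]
  have hKm : StronglyMeasurable[(mX.prod mβ).comap fun ω => (X ω, W ω)]
      fun ω => K (X ω, W ω) := (hK.comp (comap_measurable _)).stronglyMeasurable
  calc ∫ ω, K (X ω, W ω) * (A ω - (P[A | mX.comap X]) ω) ∂P
      = ∫ ω, P[(fun ω => K (X ω, W ω)) * (A - P[A | mX.comap X]) |
          (mX.prod mβ).comap fun ω => (X ω, W ω)] ω ∂P := (integral_condExp hZ).symm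
    _ = ∫ _, (0 : ℝ) ∂P := integral_congr_ae <|
        (condExp_mul_of_stronglyMeasurable_left (g := A - P[A | mX.comap X]) hKm hI
          (hAint.sub integrable_condExp)).trans
          (hres.mono fun ω h => by rw [Pi.mul_apply, h, Pi.zero_apply, mul_zero])
    _ = 0 := integral_zero _ _

end CondIndep

section PseudoOutcome

variable {Ω 𝓧 : Type*}

noncomputable def weightedErrorSlope (lam lam' : ℝ → ℝ) (p q0 q1 : 𝓧 → ℝ) (x : 𝓧)
    (y : ℝ × ℝ) : ℝ :=
  lam (p x) * (y.2 - q1 x) / p x + lam (p x) * (y.1 - q0 x) / (1 - p x)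
    - lam' (p x) * ((y.2 - q1 x) - (y.1 - q0 x))

lemma measurable_weightedErrorSlope [MeasurableSpace 𝓧] {lam lam' : ℝ → ℝ} {p q0 q1 : 𝓧 → ℝ}
    (hlam : Measurable lam) (hlam' : Measurable lam') (hp : Measurable p)
    (hq0 : Measurable q0) (hq1 : Measurable q1) :
    Measurable fun z : 𝓧 × ℝ × ℝ => weightedErrorSlope lam lam' p q0 q1 z.1 z.2 := by
  unfold weightedErrorSlope
  fun_prop

lemma wFun_mul_phiFun_sub_eq {lam lam' : ℝ → ℝ} {A Y0 Y1 Y : Ω → ℝ} {X : Ω → 𝓧}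
    {p q0 q1 : 𝓧 → ℝ} {ω : Ω} (hA : A ω = 0 ∨ A ω = 1)
    (hY : Y ω = A ω * Y1 ω + (1 - A ω) * Y0 ω) (hp : 0 < p (X ω) ∧ p (X ω) < 1)
    (hw : wFun lam lam' A X p ω ≠ 0) :
    wFun lam lam' A X p ω * (phiFun lam lam' A Y X p q0 q1 ω - (Y1 ω - Y0 ω))
      = weightedErrorSlope lam lam' p q0 q1 (X ω) (Y0 ω, Y1 ω) * (A ω - p (X ω)) := by
  have hp0 : p (X ω) ≠ 0 := hp.1.ne'
  have hp1 : 1 - p (X ω) ≠ 0 := (sub_pos.2 hp.2).ne'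
  unfold phiFun weightedErrorSlope
  unfold wFun at hw ⊢
  rw [hY]
  rcases hA with h | h <;> rw [h] at hw ⊢ <;> field_simp <;> ring

end PseudoOutcome

theorem stmt12_general {Ω 𝓧 𝓥 : Type*} [MeasurableSpace Ω] [StandardBorelSpace Ω]
    [MeasurableSpace 𝓧] [MeasurableSpace 𝓥]
    (P : Measure Ω) [IsProbabilityMeasure P]
    (X : Ω → 𝓧) (hX : Measurable X) (v : 𝓧 → 𝓥) (hv : Measurable v)
    (A Y0 Y1 Y : Ω → ℝ) (hA : Measurable A) (hY0 : Measurable Y0) (hY1 : Measurable Y1)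
    (hA01 : ∀ ω, A ω = 0 ∨ A ω = 1)
    (hYdef : ∀ ω, Y ω = A ω * Y1 ω + (1 - A ω) * Y0 ω)
    (pr : 𝓧 → ℝ) (hprm : Measurable pr) (hpr : ∀ x, 0 < pr x ∧ pr x < 1)
    (hprCE : (fun ω => pr (X ω)) =ᵐ[P] P[A | MeasurableSpace.comap X inferInstance])
    (hCE : CondIndepFun (MeasurableSpace.comap X inferInstance) hX.comap_le
      (fun ω => (Y0 ω, Y1 ω)) A P)
    (Q0 Q1 : 𝓧 → ℝ) (hQ0m : Measurable Q0) (hQ1m : Measurable Q1)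
    (lam lam' : ℝ → ℝ) (hlam : ∀ p, HasDerivAt lam (lam' p) p) (hlam' : Continuous lam')
    (hw : ∀ᵐ ω ∂P, wFun lam lam' A X pr ω ≠ 0)
    (g : 𝓥 → ℝ) (hg : Measurable g)
    (hI : Integrable (fun ω => wFun lam lam' A X pr ω *
      (phiFun lam lam' A Y X pr Q0 Q1 ω - (Y1 ω - Y0 ω)) * g (v (X ω))) P) :
    ∫ ω, wFun lam lam' A X pr ω *
      (phiFun lam lam' A Y X pr Q0 Q1 ω - (Y1 ω - Y0 ω)) * g (v (X ω)) ∂P = 0 := by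
  have hlamm : Measurable lam :=
    Differentiable.continuous (fun p => (hlam p).differentiableAt) |>.measurable
  have hK : Measurable fun z : 𝓧 × ℝ × ℝ =>
      g (v z.1) * weightedErrorSlope lam lam' pr Q0 Q1 z.1 z.2 :=
    (hg.comp (hv.comp measurable_fst)).mul
      (measurable_weightedErrorSlope hlamm hlam'.measurable hprm hQ0m hQ1m)
  have hrepr : (fun ω => wFun lam lam' A X pr ω *
      (phiFun lam lam' A Y X pr Q0 Q1 ω - (Y1 ω - Y0 ω)) * g (v (X ω)))
      =ᵐ[P] fun ω => g (v (X ω)) * weightedErrorSlope lam lam' pr Q0 Q1 (X ω) (Y0 ω, Y1 ω) *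
        (A ω - P[A | MeasurableSpace.comap X inferInstance] ω) := by
    filter_upwards [hw, hprCE] with ω hwω hπ
    rw [← hπ, wFun_mul_phiFun_sub_eq (hA01 ω) (hYdef ω) (hpr (X ω)) hwω]
    ring
  rw [integral_congr_ae hrepr]
  exact integral_comp_prodMk_mul_sub_condExp_eq_zero hX (hY0.prodMk hY1) hA hA01 hCE hK
    (hI.congr hrepr)

/-- the weighted error of the pseudo-outcome relative to the individual
treatment effect is orthogonal to every measurable function of `V`:
`E[w·(φ − (Y¹−Y⁰))·g(V)] = 0`. -/
theorem stmt12 {Ω 𝓧 𝓥 : Type*} [MeasurableSpace Ω] [StandardBorelSpace Ω]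
    [MeasurableSpace 𝓧] [MeasurableSpace 𝓥]
    (P : Measure Ω) [IsProbabilityMeasure P]
    (X : Ω → 𝓧) (hX : Measurable X) (v : 𝓧 → 𝓥) (hv : Measurable v)
    (A Y0 Y1 Y : Ω → ℝ) (hA : Measurable A) (hY0 : Measurable Y0) (hY1 : Measurable Y1)
    (hA01 : ∀ ω, A ω = 0 ∨ A ω = 1)
    (hYdef : ∀ ω, Y ω = A ω * Y1 ω + (1 - A ω) * Y0 ω)
    (pr : 𝓧 → ℝ) (hprm : Measurable pr) (hpr : ∀ x, 0 < pr x ∧ pr x < 1)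
    (hprCE : (fun ω => pr (X ω)) =ᵐ[P] P[A | MeasurableSpace.comap X inferInstance])
    (hCE : CondIndepFun (MeasurableSpace.comap X inferInstance) hX.comap_le
      (fun ω => (Y0 ω, Y1 ω)) A P)
    (Q0 Q1 : 𝓧 → ℝ) (hQ0m : Measurable Q0) (hQ1m : Measurable Q1)
    (hQ1 : P[fun ω => A ω * (Y ω - Q1 (X ω)) | MeasurableSpace.comap X inferInstance]
      =ᵐ[P] fun _ => (0 : ℝ))
    (hQ0 : P[fun ω => (1 - A ω) * (Y ω - Q0 (X ω)) | MeasurableSpace.comap X inferInstance]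
      =ᵐ[P] fun _ => (0 : ℝ))
    (lam lam' : ℝ → ℝ) (hlam : ∀ p, HasDerivAt lam (lam' p) p) (hlam' : Continuous lam')
    (hw : ∀ᵐ ω ∂P, wFun lam lam' A X pr ω ≠ 0)
    (g : 𝓥 → ℝ) (hg : Measurable g)
    (hI : Integrable (fun ω => wFun lam lam' A X pr ω *
      (phiFun lam lam' A Y X pr Q0 Q1 ω - (Y1 ω - Y0 ω)) * g (v (X ω))) P) :
    ∫ ω, wFun lam lam' A X pr ω *
      (phiFun lam lam' A Y X pr Q0 Q1 ω - (Y1 ω - Y0 ω)) * g (v (X ω)) ∂P = 0 :=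
  stmt12_general P X hX v hv A Y0 Y1 Y hA hY0 hY1 hA01 hYdef pr hprm hpr hprCE hCE Q0 Q1 hQ0m hQ1m
    lam lam' hlam hlam' hw g hg hI
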